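/- arXiv:1709.00923 — 3 statements merged into one kernel-verified Lean document; each statement's English description precedes it below -/
import Mathlib

section
/- Let K ∈ L¹(ℝ) be odd, let M ≥ 0, and let u : ℝ → ℝ be measurable with 0 ≤ u(y) ≤ M for almost every y ∈ ℝ. Then for every x ∈ ℝ the integral ∫_ℝ K(x−y)u(y)dy converges absolutely and satisfies |∫_ℝ K(x−y)u(y)dy| ≤ (1/2)·‖K‖_{L¹(ℝ)}·M. -/
open MeasureTheory Filter Set Real

noncomputable section

/-- the optimized convolution bound (1.6): for odd `K ∈ L¹(ℝ)`
and measurable `u` with `0 ≤ u ≤ M` a.e., the convolution `(K*u)(x)` converges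
absolutely and `|(K*u)(x)| ≤ ‖K‖_{L¹} M / 2`. -/
theorem odd_kernel_convolution_bound
    (K u : ℝ → ℝ) (M : ℝ) (hM : 0 ≤ M)
    (hK_int : Integrable K) (hodd : ∀ x, K (-x) = - K x)
    (hu_meas : Measurable u)
    (hu_bnd : ∀ᵐ y : ℝ, 0 ≤ u y ∧ u y ≤ M) :
    ∀ x : ℝ, Integrable (fun y => K (x - y) * u y) ∧
      |∫ y, K (x - y) * u y| ≤ (∫ y, |K y|) * M / 2 := by
  intro x
  have h1 : ∀ᵐ y : ℝ, 0 ≤ u (x - y) ∧ u (x - y) ≤ M :=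
    (Measure.measurePreserving_sub_left volume x).quasiMeasurePreserving.ae hu_bnd
  have h2 : ∀ᵐ y : ℝ, 0 ≤ u (x + y) ∧ u (x + y) ≤ M :=
    (measurePreserving_add_left volume x).quasiMeasurePreserving.ae hu_bnd
  have hKabsM : Integrable (fun y => |K y| * M) := hK_int.abs.mul_const M
  have hint0 : Integrable (fun y => K (x - y) * u y) := by
    refine (((hK_int.comp_sub_left x).abs).mul_const M).mono' ?_ ?_
    · exact ((hK_int.comp_sub_left x)).aestronglyMeasurable.mul hu_meas.aestronglyMeasurable
    · filter_upwards [hu_bnd] with y hy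
      rw [norm_mul, Real.norm_eq_abs, Real.norm_eq_abs]
      exact mul_le_mul_of_nonneg_left (abs_le.2 ⟨by linarith [hy.1], hy.2⟩) (abs_nonneg _)
  have hint1 : Integrable (fun y => K y * u (x - y)) := by
    refine hKabsM.mono' ?_ ?_
    · exact hK_int.aestronglyMeasurable.mul
        ((hu_meas.comp (measurable_const.sub measurable_id)).aestronglyMeasurable)
    · filter_upwards [h1] with y hy
      rw [norm_mul, Real.norm_eq_abs, Real.norm_eq_abs]
      exact mul_le_mul_of_nonneg_left (abs_le.2 ⟨by linarith [hy.1], hy.2⟩) (abs_nonneg _)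
  have hint2 : Integrable (fun y => K y * u (x + y)) := by
    refine hKabsM.mono' ?_ ?_
    · exact hK_int.aestronglyMeasurable.mul
        ((hu_meas.comp (measurable_const.add measurable_id)).aestronglyMeasurable)
    · filter_upwards [h2] with y hy
      rw [norm_mul, Real.norm_eq_abs, Real.norm_eq_abs]
      exact mul_le_mul_of_nonneg_left (abs_le.2 ⟨by linarith [hy.1], hy.2⟩) (abs_nonneg _)
  have e1 : ∫ y, K (x - y) * u y = ∫ y, K y * u (x - y) := by
    have h := integral_sub_left_eq_self (fun t => K t * u (x - t)) (μ := volume) x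
    simpa [sub_sub_cancel] using h
  have e2 : ∫ y, K y * u (x - y) = - ∫ y, K y * u (x + y) := by
    have h := integral_neg_eq_self (fun t => K t * u (x - t)) volume
    simp only [hodd, sub_neg_eq_add, neg_mul, integral_neg] at h
    linarith
  have key : ∫ y, (K y * u (x - y) - K y * u (x + y)) =
      2 * ∫ y, K (x - y) * u y := by
    rw [integral_sub hint1 hint2]
    linarith
  have hb : |∫ y, (K y * u (x - y) - K y * u (x + y))| ≤ (∫ y, |K y|) * M := by
    calc |∫ y, (K y * u (x - y) - K y * u (x + y))|
        ≤ ∫ y, |K y * u (x - y) - K y * u (x + y)| :=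
        by simpa [Real.norm_eq_abs] using norm_integral_le_integral_norm (fun y => K y * u (x - y) - K y * u (x + y))
      _ ≤ ∫ y, |K y| * M := by
          refine integral_mono_ae (hint1.sub hint2).abs hKabsM ?_
          filter_upwards [h1, h2] with y hy1 hy2
          rw [← mul_sub, abs_mul]
          exact mul_le_mul_of_nonneg_left
            (abs_le.2 ⟨by linarith [hy1.1, hy2.2], by linarith [hy1.2, hy2.1]⟩)
            (abs_nonneg _)
      _ = (∫ y, |K y|) * M := integral_mul_const M fun y => |K y|
  refine ⟨hint0, ?_⟩
  have h2I : 2 * |∫ y, K (x - y) * u y| ≤ (∫ y, |K y|) * M := by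
    rw [show (2:ℝ) * |∫ y, K (x - y) * u y| = |2 * ∫ y, K (x - y) * u y| by
      rw [abs_mul, abs_two], ← key]
    exact hb
  linarith
end
end

section
/- Let α ∈ (0,1), C_K ≥ 0, C₀ > 0, and ε > 0, and assume ε^α·( (1−α)/(2α²) + C_K/α ) < C₀. Let P, V : [1,+∞) → ℝ be continuously differentiable with P(t) > 0, P′(t) = V(t), and V′(t) + C_K·V(t) ≥ C₀·P(t)^{1−α} for all t ≥ 1, and assume ε·2^{1/α} < P(1) and (ε/α)·2^{1/α − 1} < V(1). Then P(t) ≥ ε·(1+t)^{1/α} for all t ≥ 1. -/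
/-!
`Q(t) = ε (1+t)^{1/α}` is a strict subsolution: `Q'' + C_K Q' < C₀ Q^{1-α}` for `t ≥ 1`, which is
exactly what the smallness condition on `ε` buys. Hence, as long as `D = P - Q` is positive,
monotonicity of `x ↦ x^{1-α}` gives `D'' + C_K D' ≥ 0`, so `e^{C_K t} D'` is nondecreasing and
`D'` stays positive, whence so does `D`. A first time at which `D` or `D'` vanishes therefore
cannot exist.
-/

open Set Real

theorem pos_of_forall_pos_Ico {g : ℝ → ℝ} {a : ℝ} (hg : ContinuousOn g (Ici a)) (ha : 0 < g a)
    (hstep : ∀ T > a, (∀ t ∈ Ico a T, 0 < g t) → 0 < g T) :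
    ∀ t ≥ a, 0 < g t := by
  by_contra! ⟨t₀, ht₀, hgt₀⟩
  set B := Ici a ∩ g ⁻¹' Iic 0
  have hBbdd : BddBelow B := ⟨a, fun _ h ↦ h.1⟩
  have hT : sInf B ∈ B :=
    (hg.preimage_isClosed_of_isClosed isClosed_Ici isClosed_Iic).csInf_mem ⟨t₀, ht₀, hgt₀⟩ hBbdd
  have hTa : a < sInf B := lt_of_le_of_ne hT.1 fun h ↦ (h ▸ ha).not_ge hT.2
  refine (hstep _ hTa fun t ht ↦ ?_).not_ge hT.2
  by_contra! hgt
  exact (csInf_le hBbdd ⟨ht.1, hgt⟩).not_gt ht.2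

theorem le_of_hasDerivWithinAt_Ici_nonneg {f f' : ℝ → ℝ} {a T : ℝ}
    (hf : ∀ t ≥ a, HasDerivWithinAt f (f' t) (Ici a) t) (hf' : ∀ t ∈ Ioo a T, 0 ≤ f' t)
    (haT : a ≤ T) : f a ≤ f T := by
  refine monotoneOn_of_hasDerivWithinAt_nonneg (convex_Icc a T)
    (fun t ht ↦ (hf t ht.1).continuousWithinAt.mono Icc_subset_Ici_self) (fun t ht ↦ ?_)
    (fun t ht ↦ hf' t (by rwa [interior_Icc] at ht)) ⟨le_rfl, haT⟩ ⟨haT, le_rfl⟩ haT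
  rw [interior_Icc] at ht ⊢
  exact (hf t ht.1.le).mono fun s hs ↦ hs.1.le

theorem pos_of_hasDerivWithinAt_of_add_mul_nonneg {a c : ℝ} {D E E' : ℝ → ℝ}
    (hD : ∀ t ≥ a, HasDerivWithinAt D (E t) (Ici a) t)
    (hE : ∀ t ≥ a, HasDerivWithinAt E (E' t) (Ici a) t)
    (hE' : ∀ t ≥ a, 0 < D t → 0 ≤ E' t + c * E t) (hDa : 0 < D a) (hEa : 0 < E a) :
    ∀ t ≥ a, 0 < D t ∧ 0 < E t := by
  have hcont (f f' : ℝ → ℝ) (hf : ∀ t ≥ a, HasDerivWithinAt f (f' t) (Ici a) t) :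
      ContinuousOn f (Ici a) := fun t ht ↦ (hf t ht).continuousWithinAt
  suffices ∀ t ≥ a, 0 < min (D t) (E t) from fun t ht ↦ lt_min_iff.mp (this t ht)
  refine pos_of_forall_pos_Ico ((hcont D E hD).inf (hcont E E' hE)) (lt_min hDa hEa)
    fun T hT hpos ↦ lt_min_iff.mpr ⟨?_, ?_⟩
  · have hDT : D a ≤ D T := le_of_hasDerivWithinAt_Ici_nonneg hD
      (fun t ht ↦ (lt_min_iff.mp (hpos t ⟨ht.1.le, ht.2⟩)).2.le) hT.le
    linarith
  · -- integrating factor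
    have hexp (t : ℝ) : HasDerivAt (fun s ↦ exp (c * s)) (exp (c * t) * c) t := by
      simpa using ((hasDerivAt_id t).const_mul c).exp
    have hET : exp (c * a) * E a ≤ exp (c * T) * E T := by
      refine le_of_hasDerivWithinAt_Ici_nonneg
        (fun t ht ↦ (hexp t).hasDerivWithinAt.mul (hE t ht)) (fun t ht ↦ ?_) hT.le
      have := hE' t ht.1.le (lt_min_iff.mp (hpos t ⟨ht.1.le, ht.2⟩)).1
      nlinarith [exp_pos (c * t)]
    by_contra! h
    nlinarith [exp_pos (c * a), exp_pos (c * T)]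

theorem hasDerivAt_const_mul_one_add_rpow (k p : ℝ) {t : ℝ} (ht : 0 < 1 + t) :
    HasDerivAt (fun s ↦ k * (1 + s) ^ p) (k * p * (1 + t) ^ (p - 1)) t :=
  ((((hasDerivAt_id' t).const_add 1).rpow_const (Or.inl ht.ne')).const_mul k).congr_deriv
    (by ring)

/-- `Q'' + C_K Q' < C₀ Q^{1-α}` for `Q(t) = ε (1+t)^{1/α}`, in the variable `s = 1 + t`;
`s ≥ 2` bounds the factor `1/s` of `Q''` by `1/2`. -/
theorem subsolution_ineq_one_add_rpow {α CK C₀ ε s : ℝ} (hα : α ∈ Ioo (0:ℝ) 1) (hε : 0 < ε)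
    (hsmall : ε ^ α * ((1 - α) / (2 * α ^ 2) + CK / α) < C₀) (hs : 2 ≤ s) :
    ε * (1 / α) * (1 / α - 1) * s ^ (1 / α - 1 - 1) + CK * (ε * (1 / α) * s ^ (1 / α - 1))
      < C₀ * (ε * s ^ (1 / α)) ^ (1 - α) := by
  obtain ⟨hα0, hα1⟩ := hα
  have hs0 : 0 < s := by linarith
  set u := s ^ (1 / α - 1)
  have hu : 0 < u := rpow_pos_of_pos hs0 _
  have hQ'' : s ^ (1 / α - 1 - 1) = u / s := rpow_sub_one hs0.ne' _
  have hQ : (ε * s ^ (1 / α)) ^ (1 - α) = ε ^ (1 - α) * u := by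
    rw [mul_rpow hε.le (rpow_nonneg hs0.le _), ← rpow_mul hs0.le]
    congr 2
    field_simp
  have hε_split : ε = ε ^ α * ε ^ (1 - α) := by
    rw [← rpow_add hε, add_sub_cancel, rpow_one]
  have hcoef : 1 / α * (1 / α - 1) / s ≤ (1 - α) / (2 * α ^ 2) := by
    rw [div_le_div_iff₀ hs0 (by positivity)]
    calc 1 / α * (1 / α - 1) * (2 * α ^ 2) = 2 * (1 - α) := by field_simp
      _ ≤ (1 - α) * s := by nlinarith
  calc ε * (1 / α) * (1 / α - 1) * s ^ (1 / α - 1 - 1) + CK * (ε * (1 / α) * u)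
      = ε * u * (1 / α * (1 / α - 1) / s + CK / α) := by rw [hQ'']; ring
    _ ≤ ε * u * ((1 - α) / (2 * α ^ 2) + CK / α) := by gcongr
    _ = ε ^ (1 - α) * u * (ε ^ α * ((1 - α) / (2 * α ^ 2) + CK / α)) := by
      nth_rw 1 [hε_split]; ring
    _ < ε ^ (1 - α) * u * C₀ := by gcongr
    _ = C₀ * (ε * s ^ (1 / α)) ^ (1 - α) := by rw [hQ]; ring

theorem ode_comparison_lower_bound_general
    (α CK C₀ ε : ℝ) (hα : α ∈ Ioo (0:ℝ) 1) (hC₀ : 0 < C₀) (hε : 0 < ε)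
    (hsmall : ε ^ α * ((1 - α) / (2 * α ^ 2) + CK / α) < C₀)
    (P V V' : ℝ → ℝ)
    (hP_deriv : ∀ t ≥ (1:ℝ), HasDerivWithinAt P (V t) (Ici 1) t)
    (hV_deriv : ∀ t ≥ (1:ℝ), HasDerivWithinAt V (V' t) (Ici 1) t)
    (hineq : ∀ t ≥ (1:ℝ), C₀ * P t ^ (1 - α) ≤ V' t + CK * V t)
    (hP1 : ε * 2 ^ (1/α) < P 1)
    (hV1 : ε / α * 2 ^ (1/α - 1) < V 1) :
    ∀ t ≥ (1:ℝ), ε * (1 + t) ^ (1/α) ≤ P t := by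
  set Q₁ := fun t : ℝ ↦ ε * (1 / α) * (1 + t) ^ (1 / α - 1)
  set Q₂ := fun t : ℝ ↦ ε * (1 / α) * (1 / α - 1) * (1 + t) ^ (1 / α - 1 - 1)
  have hpos {t : ℝ} (ht : t ≥ 1) : 0 < 1 + t := by linarith
  have hQ (t : ℝ) (ht : t ≥ 1) : HasDerivAt (fun s ↦ ε * (1 + s) ^ (1 / α)) (Q₁ t) t :=
    hasDerivAt_const_mul_one_add_rpow _ _ (hpos ht)
  have hQ₁ (t : ℝ) (ht : t ≥ 1) : HasDerivAt Q₁ (Q₂ t) t :=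
    hasDerivAt_const_mul_one_add_rpow _ _ (hpos ht)
  have hdom (t : ℝ) (ht : t ≥ 1) (hPQ : 0 < P t - ε * (1 + t) ^ (1 / α)) :
      0 ≤ (V' t - Q₂ t) + CK * (V t - Q₁ t) := by
    have hmono : C₀ * (ε * (1 + t) ^ (1 / α)) ^ (1 - α) ≤ C₀ * P t ^ (1 - α) := by
      gcongr <;> linarith [hα.2]
    linarith [subsolution_ineq_one_add_rpow hα hε hsmall (by linarith : 2 ≤ 1 + t), hineq t ht]
  intro t ht
  refine (sub_pos.mp (pos_of_hasDerivWithinAt_of_add_mul_nonneg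
    (fun t ht ↦ (hP_deriv t ht).sub (hQ t ht).hasDerivWithinAt)
    (fun t ht ↦ (hV_deriv t ht).sub (hQ₁ t ht).hasDerivWithinAt) hdom ?_ ?_ t ht).1).le
  · simp only [Pi.sub_apply, one_add_one_eq_two]; linarith
  · simp only [Q₁, one_add_one_eq_two, mul_one_div]; linarith

/-- the ODE comparison argument in the proof of Theorem 1.7(iii):
if `P' = V`, `V' + C_K V ≥ C₀ P^{1-α}` on `[1,∞)`, with `P > 0`, and if
`ε^α ((1-α)/(2α²) + C_K/α) < C₀`, `ε 2^{1/α} < P(1)`, `(ε/α) 2^{1/α-1} < V(1)`,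
then `P(t) ≥ ε (1+t)^{1/α}` for all `t ≥ 1`.  Here `V'` is the derivative `V'`
of `V` within `[1,∞)`. -/
theorem ode_comparison_lower_bound
    (α CK C₀ ε : ℝ) (hα : α ∈ Ioo (0:ℝ) 1) (hCK : 0 ≤ CK) (hC₀ : 0 < C₀) (hε : 0 < ε)
    (hsmall : ε ^ α * ((1 - α) / (2 * α ^ 2) + CK / α) < C₀)
    (P V V' : ℝ → ℝ)
    (hP_pos : ∀ t ≥ (1:ℝ), 0 < P t)
    (hP_deriv : ∀ t ≥ (1:ℝ), HasDerivWithinAt P (V t) (Ici 1) t)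
    (hV_deriv : ∀ t ≥ (1:ℝ), HasDerivWithinAt V (V' t) (Ici 1) t)
    (hV'_cont : ContinuousOn V' (Ici 1))
    (hV_cont : ContinuousOn V (Ici 1))
    (hP_cont : ContinuousOn P (Ici 1))
    (hineq : ∀ t ≥ (1:ℝ), C₀ * P t ^ (1 - α) ≤ V' t + CK * V t)
    (hP1 : ε * 2 ^ (1/α) < P 1)
    (hV1 : ε / α * 2 ^ (1/α - 1) < V 1) :
    ∀ t ≥ (1:ℝ), ε * (1 + t) ^ (1/α) ≤ P t :=
  ode_comparison_lower_bound_general α CK C₀ ε hα hC₀ hε hsmall P V V' hP_deriv hV_deriv hineq hP1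
    hV1
end

section
/- Let K : ℝ → ℝ be odd, bounded, nonnegative and nonincreasing on (0,+∞), continuously differentiable on ℝ\{0}, and convex on (0,+∞), and set J := lim_{x→0⁻} 2K(x) (so that |J| = 2·lim_{x→0⁺} K(x)). Let u : ℝ → ℝ be continuous and integrable with 0 ≤ u(y) ≤ 1 for all y ∈ ℝ and M := ∫_ℝ u(y)dy > 0. Then the convolution K*u is differentiable on ℝ, with (K*u)′(x) = |J|·u(x) + ∫_0^{+∞} (u(x−y) + u(x+y))·K′(y)dy for every x ∈ ℝ, and consequently (K*u)′(x) ≥ |J|·u(x) − |J| + 2K(M/2) for every x ∈ ℝ. -/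
/-!
Since `K` is odd, `(K*u)(x) = ∫₀^∞ K(y) (u(x-y) - u(x+y)) dy`, and the bracket is `-∂_y V_x(y)`
for `V_x(y) = ∫_{-∞}^{x-y} u - ∫_{x+y}^{∞} u` (`outerMassDiff u x y`), which is bounded and
vanishes as `y → ∞`. Integrating by parts,
`(K*u)(x) = K(0⁺) V_x(0) + ∫₀^∞ V_x(y) K'(y) dy`. As `K'` has a sign and `K` is bounded, `K'` is
integrable on `(0, ∞)`, so we may differentiate in `x` under the integral sign, using
`∂_x V_x(y) = u(x-y) + u(x+y)`; the boundary term contributes `2 K(0⁺) u(x) = |J| u(x)`.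

For the bound, `K'` is nondecreasing on `(0, ∞)` by convexity and the weight
`u(x-y) + u(x+y) ∈ [0, 2]` has total mass `M`, so by the bathtub principle the integral is at
least `2 ∫₀^{M/2} K' = 2 K(M/2) - |J|`.
-/

open MeasureTheory Filter Set Real Topology

section PrimitiveIntegrals

variable {E : Type*} [NormedAddCommGroup E] [NormedSpace ℝ E] {u : ℝ → E}

theorem integral_eq_integral_Ioi_add_comp_neg (hi : Integrable u) :
    ∫ y, u y = ∫ y in Ioi 0, (u y + u (-y)) := by
  rw [integral_add hi.integrableOn hi.comp_neg.integrableOn, integral_comp_neg_Ioi, neg_zero,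
    add_comm, intervalIntegral.integral_Iic_add_Ioi hi.integrableOn hi.integrableOn]

theorem integral_Ioi_comp_sub_add_comp_add (hi : Integrable u) (x : ℝ) :
    ∫ y in Ioi 0, (u (x - y) + u (x + y)) = ∫ y, u y := by
  rw [← integral_add_left_eq_self u x, integral_eq_integral_Ioi_add_comp_neg (hi.comp_add_left x)]
  simp only [add_comm, ← sub_eq_add_neg]

theorem norm_setIntegral_le_integral_norm (hi : Integrable u) (s : Set ℝ) :
    ‖∫ y in s, u y‖ ≤ ∫ y, ‖u y‖ :=
  (norm_integral_le_integral_norm _).trans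
    (setIntegral_le_integral hi.norm (ae_of_all _ fun _ => norm_nonneg _))

variable [CompleteSpace E]

theorem hasDerivAt_integral_Iic (hu : Continuous u) (hi : Integrable u) (t : ℝ) :
    HasDerivAt (fun s => ∫ y in Iic s, u y) (u t) t := by
  have h : ∀ s, ∫ y in Iic s, u y = (∫ y in Iic 0, u y) + ∫ y in 0..s, u y := fun s => by
    rw [← intervalIntegral.integral_Iic_sub_Iic hi.integrableOn hi.integrableOn,
      add_sub_cancel]
  rw [funext h]
  exact (hu.integral_hasStrictDerivAt 0 t).hasDerivAt.const_add _

theorem hasDerivAt_integral_Ioi (hu : Continuous u) (hi : Integrable u) (t : ℝ) :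
    HasDerivAt (fun s => ∫ y in Ioi s, u y) (-u t) t := by
  have h : ∀ s, ∫ y in Ioi s, u y = (∫ y, u y) - ∫ y in Iic s, u y := fun s =>
    eq_sub_of_add_eq' (intervalIntegral.integral_Iic_add_Ioi hi.integrableOn hi.integrableOn)
  rw [funext h]
  exact (hasDerivAt_integral_Iic hu hi t).const_sub _

end PrimitiveIntegrals

theorem ContinuousOn.aestronglyMeasurable_of_compl_singleton {f : ℝ → ℝ} {μ : Measure ℝ}
    [NullSingletonClass μ] (a : ℝ) (hf : ContinuousOn f {a}ᶜ) : AEStronglyMeasurable f μ := by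
  simpa using hf.aestronglyMeasurable (μ := μ) (measurableSet_singleton a).compl

section OneSidedLimits

variable {f f' : ℝ → ℝ} {a k l : ℝ}

theorem AntitoneOn.exists_tendsto_atTop (hf : AntitoneOn f (Ioi a)) (hb : BddBelow (f '' Ioi a)) :
    ∃ l, Tendsto f atTop (𝓝 l) := by
  have hmem : ∀ t, max t (a + 1) ∈ Ioi a := fun t =>
    (lt_add_one a).trans_le (le_max_right _ _)
  have hg : Antitone fun t => f (max t (a + 1)) := fun s t hst =>
    hf (hmem s) (hmem t) (max_le_max hst le_rfl)
  refine ⟨_, (tendsto_atTop_ciInf hg (hb.mono ?_)).congr' ?_⟩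
  · rintro _ ⟨t, rfl⟩
    exact ⟨_, hmem t, rfl⟩
  · filter_upwards [eventually_ge_atTop (a + 1)] with t ht
    rw [max_eq_left ht]

theorem tendsto_nhdsGT_zero_of_odd (hodd : ∀ x, f (-x) = -f x)
    (h : Tendsto f (𝓝[<] 0) (𝓝 l)) : Tendsto f (𝓝[>] 0) (𝓝 (-l)) := by
  have h' := (h.comp (tendsto_neg_nhdsGT_neg (a := (0 : ℝ)))).neg
  simpa [Function.comp_def, hodd] using h'

/-- Replacing `f a` by the one-sided limit `k` reduces this to the FTC on `(a, ∞)`. -/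
theorem integrableOn_Ioi_deriv_and_integral_eq_of_tendsto_nhdsGT
    (hk : Tendsto f (𝓝[>] a) (𝓝 k)) (hd : ∀ x ∈ Ioi a, HasDerivAt f (f' x) x)
    (hf' : ∀ x ∈ Ioi a, f' x ≤ 0) (hl : Tendsto f atTop (𝓝 l)) :
    IntegrableOn f' (Ioi a) ∧ ∫ x in Ioi a, f' x = l - k := by
  classical
  set g := Function.update f a k
  have hg : ContinuousWithinAt g (Ici a) a :=
    continuousWithinAt_update_same.2 (by rwa [Ici_sdiff_left])
  have hgd : ∀ x ∈ Ioi a, HasDerivAt g (f' x) x := fun x hx =>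
    (hd x hx).congr_of_eventuallyEq <| by
      filter_upwards [eventually_ne_nhds (ne_of_gt hx)] with y hy
      exact Function.update_of_ne hy _ _
  have hgl : Tendsto g atTop (𝓝 l) := hl.congr' <| by
    filter_upwards [eventually_ne_atTop a] with y hy
    exact (Function.update_of_ne hy _ _).symm
  refine ⟨integrableOn_Ioi_deriv_of_nonpos hg hgd hf' hgl, ?_⟩
  simpa [g] using integral_Ioi_of_hasDerivAt_of_nonpos hg hgd hf' hgl

theorem AntitoneOn.integrableOn_Ioi_deriv_and_intervalIntegral_deriv_eq
    (hf : AntitoneOn f (Ioi a)) (hb : BddBelow (f '' Ioi a))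
    (hd : ∀ x ∈ Ioi a, DifferentiableAt ℝ f x) (hk : Tendsto f (𝓝[>] a) (𝓝 k)) :
    IntegrableOn (deriv f) (Ioi a) ∧ ∀ c ∈ Ioi a, ∫ x in a..c, deriv f x = f c - k := by
  have hd' : ∀ x ∈ Ioi a, HasDerivAt f (deriv f x) x := fun x hx => (hd x hx).hasDerivAt
  have hf' : ∀ x ∈ Ioi a, deriv f x ≤ 0 := fun x hx => by
    rw [← derivWithin_of_isOpen isOpen_Ioi hx]
    exact hf.derivWithin_nonpos
  obtain ⟨l, hl⟩ := hf.exists_tendsto_atTop hb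
  obtain ⟨hint, ha⟩ := integrableOn_Ioi_deriv_and_integral_eq_of_tendsto_nhdsGT hk hd' hf' hl
  refine ⟨hint, fun c (hac : a < c) => ?_⟩
  have hc := integrableOn_Ioi_deriv_and_integral_eq_of_tendsto_nhdsGT
    ((hd' c hac).continuousAt.tendsto.mono_left nhdsWithin_le_nhds)
    (fun x hx => hd' x (hac.trans hx)) (fun x hx => hf' x (hac.trans hx)) hl
  rw [← intervalIntegral.integral_Ioi_sub_Ioi hint hac.le, ha, hc.2]
  ring

end OneSidedLimits

/-- Bathtub principle: the extremal weight is `w = m` on `(0, c]`. -/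
theorem mul_intervalIntegral_le_integral_Ioi_mul_of_monotoneOn {ψ w : ℝ → ℝ} {m c : ℝ}
    (hc : 0 < c) (hψ : MonotoneOn ψ (Ioi 0)) (hψi : IntegrableOn ψ (Ioi 0))
    (hw0 : ∀ y, 0 ≤ w y) (hwm : ∀ y, w y ≤ m) (hwi : IntegrableOn w (Ioi 0))
    (hw : ∫ y in Ioi 0, w y = m * c) :
    m * ∫ y in 0..c, ψ y ≤ ∫ y in Ioi 0, w y * ψ y := by
  have hwψ : IntegrableOn (fun y => w y * ψ y) (Ioi 0) :=
    hψi.bdd_mul hwi.aestronglyMeasurable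
      (ae_of_all _ fun y => by rw [norm_of_nonneg (hw0 y)]; exact hwm y)
  have hIoi_c {g : ℝ → ℝ} (hg : IntegrableOn g (Ioi 0)) : IntegrableOn g (Ioi c) :=
    hg.mono_set (Ioi_subset_Ioi hc.le)
  have hIoc {g : ℝ → ℝ} (hg : IntegrableOn g (Ioi 0)) : IntervalIntegrable g volume 0 c :=
    (intervalIntegrable_iff_integrableOn_Ioc_of_le hc.le).2 (hg.mono_set Ioc_subset_Ioi_self)
  -- On `(0, c)` both `w - m` and `ψ - ψ c` are nonpositive; beyond `c`, `w ≥ 0` and `ψ ≥ ψ c`.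
  have hnear : ∫ y in 0..c, (m * ψ y + ψ c * (w y - m)) ≤ ∫ y in 0..c, w y * ψ y := by
    refine intervalIntegral.integral_mono_on_of_le_Ioo hc.le
      (((hIoc hψi).const_mul m).add (((hIoc hwi).sub intervalIntegrable_const).const_mul _))
      (hIoc hwψ) fun y hy => ?_
    have := hψ hy.1 hc hy.2.le
    nlinarith [hwm y]
  have hfar : ∫ y in Ioi c, w y * ψ c ≤ ∫ y in Ioi c, w y * ψ y :=
    setIntegral_mono_on ((hIoi_c hwi).mul_const _) (hIoi_c hwψ) measurableSet_Ioi fun y hy =>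
      mul_le_mul_of_nonneg_left (hψ hc (hc.trans hy) hy.le) (hw0 y)
  have hmass := intervalIntegral.integral_interval_add_Ioi hwi (hIoi_c hwi)
  rw [← intervalIntegral.integral_interval_add_Ioi hwψ (hIoi_c hwψ)]
  rw [intervalIntegral.integral_add ((hIoc hψi).const_mul m)
      (((hIoc hwi).sub intervalIntegrable_const).const_mul _),
    intervalIntegral.integral_const_mul, intervalIntegral.integral_const_mul,
    intervalIntegral.integral_sub (hIoc hwi) intervalIntegrable_const,
    intervalIntegral.integral_const] at hnear
  rw [integral_mul_const] at hfar
  simp only [sub_zero, smul_eq_mul] at hnear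
  have hbalance : ψ c * ((∫ y in 0..c, w y) - c * m) + (∫ y in Ioi c, w y) * ψ c = 0 := by
    linear_combination ψ c * (hmass.trans hw)
  linarith

section OuterMass

variable {u : ℝ → ℝ}

noncomputable def outerMassDiff (u : ℝ → ℝ) (x y : ℝ) : ℝ :=
  (∫ s in Iic (x - y), u s) - ∫ s in Ioi (x + y), u s

theorem norm_outerMassDiff_le (hi : Integrable u) (x y : ℝ) :
    ‖outerMassDiff u x y‖ ≤ 2 * ∫ s, ‖u s‖ :=
  (norm_sub_le _ _).trans <| by
    linarith [norm_setIntegral_le_integral_norm hi (Iic (x - y)),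
      norm_setIntegral_le_integral_norm hi (Ioi (x + y))]

theorem tendsto_outerMassDiff_atTop (x : ℝ) : Tendsto (outerMassDiff u x) atTop (𝓝 0) := by
  have h1 := tendsto_integral_Iic_zero (f := u) (μ := volume)
    (tendsto_atBot_add_const_left _ x tendsto_neg_atTop_atBot)
  have h2 := tendsto_integral_Ioi_zero (f := u) (μ := volume)
    (tendsto_atTop_add_const_left _ x tendsto_id)
  simpa only [sub_zero] using (h1.sub h2).congr fun y => by rw [outerMassDiff, sub_eq_add_neg x, id]

variable (hu : Continuous u) (hi : Integrable u)
include hu hi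

theorem hasDerivAt_outerMassDiff_center (x y : ℝ) :
    HasDerivAt (fun x => outerMassDiff u x y) (u (x - y) + u (x + y)) x := by
  have h1 := (hasDerivAt_integral_Iic hu hi (x - y)).comp x ((hasDerivAt_id x).sub_const y)
  have h2 := (hasDerivAt_integral_Ioi hu hi (x + y)).comp x ((hasDerivAt_id x).add_const y)
  exact (h1.sub h2).congr_deriv (by ring)

theorem hasDerivAt_outerMassDiff_radius (x y : ℝ) :
    HasDerivAt (outerMassDiff u x) (u (x + y) - u (x - y)) y := by
  have h1 := (hasDerivAt_integral_Iic hu hi (x - y)).comp y ((hasDerivAt_id y).const_sub x)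
  have h2 := (hasDerivAt_integral_Ioi hu hi (x + y)).comp y ((hasDerivAt_id y).const_add x)
  exact (h1.sub h2).congr_deriv (by ring)

theorem continuous_outerMassDiff (x : ℝ) : Continuous (outerMassDiff u x) :=
  continuous_iff_continuousAt.2 fun y => (hasDerivAt_outerMassDiff_radius hu hi x y).continuousAt

theorem hasDerivAt_integral_outerMassDiff_mul {C : ℝ} (hC : ∀ y, ‖u y‖ ≤ C) {φ : ℝ → ℝ}
    {μ : Measure ℝ} (hφ : Integrable φ μ) (x : ℝ) :
    HasDerivAt (fun x => ∫ y, outerMassDiff u x y * φ y ∂μ)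
      (∫ y, (u (x - y) + u (x + y)) * φ y ∂μ) x := by
  refine (hasDerivAt_integral_of_dominated_loc_of_deriv_le (bound := fun y => 2 * C * ‖φ y‖)
    univ_mem (.of_forall fun x => (continuous_outerMassDiff hu hi x).aestronglyMeasurable.mul hφ.1)
    (hφ.bdd_mul (continuous_outerMassDiff hu hi x).aestronglyMeasurable
      (ae_of_all _ (norm_outerMassDiff_le hi x)))
    ((by fun_prop : Continuous fun y => u (x - y) + u (x + y)).aestronglyMeasurable.mul hφ.1)
    (ae_of_all _ fun y x _ => ?_) (hφ.norm.const_mul _)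
    (ae_of_all _ fun y x _ => (hasDerivAt_outerMassDiff_center hu hi x y).mul_const (φ y))).2
  rw [norm_mul]
  gcongr
  exact (norm_add_le _ _).trans (by linarith [hC (x - y), hC (x + y)])

end OuterMass

section OddConvolution

variable {K u : ℝ → ℝ} {k₀ B : ℝ}

theorem integral_comp_sub_mul_eq_integral_Ioi_of_odd (hodd : ∀ x, K (-x) = -K x)
    (hK : AEStronglyMeasurable K) (hB : ∀ y, |K y| ≤ B) (hi : Integrable u) (x : ℝ) :
    ∫ y, K (x - y) * u y = ∫ y in Ioi 0, K y * (u (x - y) - u (x + y)) := by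
  have hint : Integrable fun y => K y * u (x - y) :=
    (hi.comp_sub_left x).bdd_mul hK (ae_of_all _ hB)
  calc ∫ y, K (x - y) * u y = ∫ y, K y * u (x - y) := by
        simpa using integral_sub_left_eq_self (fun y => K y * u (x - y)) volume x
    _ = ∫ y in Ioi 0, (K y * u (x - y) + K (-y) * u (x - -y)) :=
        integral_eq_integral_Ioi_add_comp_neg hint
    _ = ∫ y in Ioi 0, K y * (u (x - y) - u (x + y)) := by
        congr 1
        ext y
        rw [hodd, sub_neg_eq_add]
        ring

theorem integral_Ioi_mul_sub_eq_add_integral_outerMassDiff_mul_deriv (hB : ∀ y, |K y| ≤ B)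
    (hd : ∀ y ∈ Ioi 0, DifferentiableAt ℝ K y) (hk : Tendsto K (𝓝[>] 0) (𝓝 k₀))
    (hK' : IntegrableOn (deriv K) (Ioi 0)) (hu : Continuous u) (hi : Integrable u) (x : ℝ) :
    ∫ y in Ioi 0, K y * (u (x - y) - u (x + y)) =
      k₀ * outerMassDiff u x 0 + ∫ y in Ioi 0, outerMassDiff u x y * deriv K y := by
  have hV := continuous_outerMassDiff hu hi x
  have hK_meas : AEStronglyMeasurable K (volume.restrict (Ioi 0)) :=
    ContinuousOn.aestronglyMeasurable (fun y hy => (hd y hy).continuousAt.continuousWithinAt)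
      measurableSet_Ioi
  have hibp := integral_Ioi_mul_deriv_eq_deriv_mul (a := 0) (b' := 0)
    (fun y hy => (hd y hy).hasDerivAt) (fun y _ => hasDerivAt_outerMassDiff_radius hu hi x y)
    (((hi.comp_add_left x).sub (hi.comp_sub_left x)).integrableOn.bdd_mul hK_meas
      (ae_of_all _ hB))
    (hK'.mul_bdd hV.aestronglyMeasurable (ae_of_all _ (norm_outerMassDiff_le hi x)))
    (hk.mul (hV.tendsto 0 |>.mono_left nhdsWithin_le_nhds))
    (isBoundedUnder_le_mul_tendsto_zero (isBoundedUnder_of ⟨B, hB⟩)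
      (tendsto_outerMassDiff_atTop x))
  calc ∫ y in Ioi 0, K y * (u (x - y) - u (x + y))
      = -∫ y in Ioi 0, K y * (u (x + y) - u (x - y)) := by
        rw [← integral_neg]
        congr 1
        ext y
        ring
    _ = _ := by
        simp only [hibp, mul_comm (deriv K _)]
        ring

theorem hasDerivAt_convolution_of_odd (hodd : ∀ x, K (-x) = -K x) (hB : ∀ y, |K y| ≤ B)
    (hd : ∀ y ≠ 0, DifferentiableAt ℝ K y) (hk : Tendsto K (𝓝[>] 0) (𝓝 k₀))
    (hK' : IntegrableOn (deriv K) (Ioi 0)) (hu : Continuous u) (hi : Integrable u) {C : ℝ}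
    (hC : ∀ y, ‖u y‖ ≤ C) (x : ℝ) :
    HasDerivAt (fun z => ∫ y, K (z - y) * u y)
      (2 * k₀ * u x + ∫ y in Ioi 0, (u (x - y) + u (x + y)) * deriv K y) x := by
  have hK : AEStronglyMeasurable K :=
    ContinuousOn.aestronglyMeasurable_of_compl_singleton 0 fun y hy =>
      (hd y hy).continuousAt.continuousWithinAt
  have hrepr : (fun z => ∫ y, K (z - y) * u y) = fun z =>
      k₀ * outerMassDiff u z 0 + ∫ y in Ioi 0, outerMassDiff u z y * deriv K y :=
    funext fun z => by
      rw [integral_comp_sub_mul_eq_integral_Ioi_of_odd hodd hK hB hi,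
        integral_Ioi_mul_sub_eq_add_integral_outerMassDiff_mul_deriv hB
          (fun y hy => hd y hy.ne') hk hK' hu hi]
  rw [hrepr]
  exact (((hasDerivAt_outerMassDiff_center hu hi x 0).const_mul k₀).add
    (hasDerivAt_integral_outerMassDiff_mul hu hi hC hK' x)).congr_deriv (by simp; ring)

end OddConvolution

theorem convolution_derivative_lower_bound_general
    (K : ℝ → ℝ) (J : ℝ) (u : ℝ → ℝ)
    (hodd : ∀ x, K (-x) = - K x)
    (hK_bdd : ∃ B, ∀ x, |K x| ≤ B)
    (hK_nonneg : ∀ x > (0:ℝ), 0 ≤ K x)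
    (hK_anti : AntitoneOn K (Ioi 0))
    (hK_diff : ∀ x : ℝ, x ≠ 0 → DifferentiableAt ℝ K x)
    (hK_conv : ConvexOn ℝ (Ioi 0) K)
    (hJ : Tendsto (fun x => 2 * K x) (nhdsWithin 0 (Iio 0)) (nhds J))
    (hu_cont : Continuous u) (hu_int : Integrable u)
    (hu01 : ∀ y, 0 ≤ u y ∧ u y ≤ 1)
    (hM_pos : 0 < ∫ y, u y) :
    ∀ x : ℝ,
      HasDerivAt (fun z => ∫ y, K (z - y) * u y)
        (|J| * u x + ∫ y in Ioi (0:ℝ), (u (x - y) + u (x + y)) * deriv K y) x ∧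
      |J| * u x - |J| + 2 * K ((∫ y, u y) / 2)
        ≤ |J| * u x + ∫ y in Ioi (0:ℝ), (u (x - y) + u (x + y)) * deriv K y := by
  obtain ⟨B, hB⟩ := hK_bdd
  have hk : Tendsto K (𝓝[>] 0) (𝓝 (-(J / 2))) :=
    tendsto_nhdsGT_zero_of_odd hodd (by simpa using hJ.div_const 2)
  have habs : |J| = 2 * -(J / 2) := by
    have hJ_nonpos : J ≤ 0 := le_of_tendsto hJ <| by
      filter_upwards [self_mem_nhdsWithin] with y (hy : y < 0)
      linarith [hodd y, hK_nonneg (-y) (neg_pos.2 hy)]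
    rw [abs_of_nonpos hJ_nonpos]
    ring
  obtain ⟨hK', hK'_integral⟩ := hK_anti.integrableOn_Ioi_deriv_and_intervalIntegral_deriv_eq
    ⟨0, by rintro _ ⟨y, hy, rfl⟩; exact hK_nonneg y hy⟩ (fun y hy => hK_diff y (ne_of_gt hy)) hk
  have hc : 0 < (∫ y, u y) / 2 := half_pos hM_pos
  intro x
  rw [habs]
  refine ⟨hasDerivAt_convolution_of_odd hodd hB hK_diff hk hK' hu_cont hu_int
    (fun y => (norm_of_nonneg (hu01 y).1).trans_le (hu01 y).2) x, ?_⟩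
  have hbathtub := mul_intervalIntegral_le_integral_Ioi_mul_of_monotoneOn (m := 2) hc
    (hK_conv.monotoneOn_deriv fun y hy => hK_diff y (ne_of_gt hy)) hK'
    (fun y => add_nonneg (hu01 (x - y)).1 (hu01 (x + y)).1)
    (fun y => by linarith [(hu01 (x - y)).2, (hu01 (x + y)).2])
    ((hu_int.comp_sub_left x).add (hu_int.comp_add_left x)).integrableOn
    (by rw [integral_Ioi_comp_sub_add_comp_add hu_int]; ring)
  rw [hK'_integral _ hc] at hbathtub
  linarith

/-- the derivative formula for `K*u` and the key lower bound in
Section 3.4: for `K` odd, bounded, nonnegative and nonincreasing on `(0,∞)`,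
`C¹` off the origin and convex on `(0,∞)`, with jump `J = lim_{x→0⁻} 2K(x)`, and
for `u` continuous, integrable, `0 ≤ u ≤ 1` with `M = ∫ u > 0`, the convolution
`K*u` is differentiable with
`(K*u)'(x) = |J| u(x) + ∫_0^∞ (u(x-y) + u(x+y)) K'(y) dy ≥ |J| u(x) − |J| + 2 K(M/2)`. -/
theorem convolution_derivative_lower_bound
    (K : ℝ → ℝ) (J : ℝ) (u : ℝ → ℝ)
    (hodd : ∀ x, K (-x) = - K x)
    (hK_bdd : ∃ B, ∀ x, |K x| ≤ B)
    (hK_nonneg : ∀ x > (0:ℝ), 0 ≤ K x)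
    (hK_anti : AntitoneOn K (Ioi 0))
    (hK_diff : ∀ x : ℝ, x ≠ 0 → DifferentiableAt ℝ K x)
    (hK_dcont : ContinuousOn (deriv K) {(0:ℝ)}ᶜ)
    (hK_conv : ConvexOn ℝ (Ioi 0) K)
    (hJ : Tendsto (fun x => 2 * K x) (nhdsWithin 0 (Iio 0)) (nhds J))
    (hu_cont : Continuous u) (hu_int : Integrable u)
    (hu01 : ∀ y, 0 ≤ u y ∧ u y ≤ 1)
    (hM_pos : 0 < ∫ y, u y) :
    ∀ x : ℝ,
      HasDerivAt (fun z => ∫ y, K (z - y) * u y)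
        (|J| * u x + ∫ y in Ioi (0:ℝ), (u (x - y) + u (x + y)) * deriv K y) x ∧
      |J| * u x - |J| + 2 * K ((∫ y, u y) / 2)
        ≤ |J| * u x + ∫ y in Ioi (0:ℝ), (u (x - y) + u (x + y)) * deriv K y :=
  convolution_derivative_lower_bound_general K J u hodd hK_bdd hK_nonneg hK_anti hK_diff hK_conv hJ
    hu_cont hu_int hu01 hM_pos
end
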